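/- arXiv:1305.6156 — 2 statements merged into one kernel-verified Lean document; each statement's English description precedes it below -/
import Mathlib

section
/- If all joint probabilities π_{ij}(d_k,d_l) > 0 for i ≠ j and y_i(d_k) = y_i(d_l) for all i (no effect of condition l relative to k), then the Horvitz-Thompson-type covariance estimator with Young's-inequality diagonal correction is exactly unbiased for Cov(Ŷ(d_k), Ŷ(d_l)). -/
open Finset

noncomputable def expect {Ωs : Type*} [Fintype Ωs] (p : Ωs → ℝ) (X : Ωs → ℝ) : ℝ :=
  ∑ ω, p ω * X ω

noncomputable def Var' {Ωs : Type*} [Fintype Ωs] (p : Ωs → ℝ) (X : Ωs → ℝ) : ℝ :=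
  expect p (fun ω => (X ω - expect p X) ^ 2)

noncomputable def Cov' {Ωs : Type*} [Fintype Ωs] (p : Ωs → ℝ) (X Y : Ωs → ℝ) : ℝ :=
  expect p (fun ω => (X ω - expect p X) * (Y ω - expect p Y))

lemma cov_eq {Ωs : Type*} [Fintype Ωs] (p X Y : Ωs → ℝ) (hp1 : ∑ ω, p ω = 1) :
    Cov' p X Y = expect p (fun ω => X ω * Y ω) - expect p X * expect p Y := by
  simp only [Cov', _root_.expect]
  have h : ∀ ω, p ω * ((X ω - ∑ w, p w * X w) * (Y ω - ∑ w, p w * Y w)) =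
      p ω * (X ω * Y ω) - (∑ w, p w * X w) * (p ω * Y ω)
        - (∑ w, p w * Y w) * (p ω * X ω)
        + (∑ w, p w * X w) * (∑ w, p w * Y w) * p ω := by
    intro ω; ring
  rw [Finset.sum_congr rfl (fun ω _ => h ω)]
  rw [Finset.sum_add_distrib, Finset.sum_sub_distrib, Finset.sum_sub_distrib,
    ← Finset.mul_sum, ← Finset.mul_sum, ← Finset.mul_sum, hp1]
  ring

/-- When all cross joint probabilities are positive and potential outcomes under the two
exposures coincide, the HT-type covariance estimator with Young's-inequality diagonal
correction is exactly unbiased for the covariance of the HT totals. -/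
theorem stmt9 {Ωs : Type*} [Fintype Ωs] (p : Ωs → ℝ)
    (hp0 : ∀ ω, 0 ≤ p ω) (hp1 : ∑ ω, p ω = 1)
    {N : ℕ} {Δ : Type*} [DecidableEq Δ]
    (D : Fin N → Ωs → Δ) (y : Fin N → Δ → ℝ)
    (π : Fin N → Δ → ℝ)
    (hπ : ∀ i d, π i d = ∑ ω, p ω * (if D i ω = d then (1:ℝ) else 0))
    (hπ01 : ∀ i d, 0 < π i d ∧ π i d < 1)
    (dk dl : Δ) (hkl : dk ≠ dl)
    (πc : Fin N → Fin N → ℝ)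
    (hπc : ∀ i j, πc i j = ∑ ω, p ω *
      ((if D i ω = dk then (1:ℝ) else 0) * (if D j ω = dl then (1:ℝ) else 0)))
    (hpos : ∀ i j, i ≠ j → 0 < πc i j)
    (hy : ∀ i, y i dk = y i dl) :
    expect p (fun ω =>
        (∑ i, ∑ j ∈ Finset.univ.erase i,
          ((if D i ω = dk then (1:ℝ) else 0) * (if D j ω = dl then (1:ℝ) else 0) / πc i j)
            * (y i dk / π i dk) * (y j dl / π j dl) * (πc i j - π i dk * π j dl))
        - ∑ i, ((if D i ω = dk then (1:ℝ) else 0) * y i dk ^ 2 / (2 * π i dk)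
            + (if D i ω = dl then (1:ℝ) else 0) * y i dl ^ 2 / (2 * π i dl)))
      = Cov' p (fun ω => ∑ i, (if D i ω = dk then (1:ℝ) else 0) * y i dk / π i dk)
               (fun ω => ∑ i, (if D i ω = dl then (1:ℝ) else 0) * y i dl / π i dl) := by
  classical
  have hπne : ∀ i d, π i d ≠ 0 := fun i d => (hπ01 i d).1.ne'
  have hπcii : ∀ i, πc i i = 0 := by
    intro i
    rw [hπc]
    apply Finset.sum_eq_zero
    intro ω _
    by_cases h : D i ω = dk
    · simp [h, hkl]
    · simp [h]
  -- RHS as E[XY] - EX EY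
  rw [cov_eq _ _ _ hp1]
  -- compute EX
  have hEX : expect p (fun ω => ∑ i, (if D i ω = dk then (1:ℝ) else 0) * y i dk / π i dk)
      = ∑ i, y i dk := by
    simp only [_root_.expect, Finset.mul_sum]
    rw [Finset.sum_comm]
    refine Finset.sum_congr rfl fun i _ => ?_
    have : ∀ ω, p ω * ((if D i ω = dk then (1:ℝ) else 0) * y i dk / π i dk)
        = (p ω * (if D i ω = dk then (1:ℝ) else 0)) * (y i dk / π i dk) := by
      intro ω; ring
    rw [Finset.sum_congr rfl (fun ω _ => this ω), ← Finset.sum_mul, ← hπ]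
    have hne := hπne i dk
    field_simp
  have hEY : expect p (fun ω => ∑ i, (if D i ω = dl then (1:ℝ) else 0) * y i dl / π i dl)
      = ∑ i, y i dl := by
    simp only [_root_.expect, Finset.mul_sum]
    rw [Finset.sum_comm]
    refine Finset.sum_congr rfl fun i _ => ?_
    have : ∀ ω, p ω * ((if D i ω = dl then (1:ℝ) else 0) * y i dl / π i dl)
        = (p ω * (if D i ω = dl then (1:ℝ) else 0)) * (y i dl / π i dl) := by
      intro ω; ring
    rw [Finset.sum_congr rfl (fun ω _ => this ω), ← Finset.sum_mul, ← hπ]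
    have hne := hπne i dl
    field_simp
  -- compute E[XY]
  have hEXY : expect p (fun ω =>
      (∑ i, (if D i ω = dk then (1:ℝ) else 0) * y i dk / π i dk) *
      (∑ j, (if D j ω = dl then (1:ℝ) else 0) * y j dl / π j dl))
      = ∑ i, ∑ j, πc i j * (y i dk / π i dk) * (y j dl / π j dl) := by
    have h1 : ∀ ω : Ωs, p ω * ((∑ i, (if D i ω = dk then (1:ℝ) else 0) * y i dk / π i dk) *
        (∑ j, (if D j ω = dl then (1:ℝ) else 0) * y j dl / π j dl))
        = ∑ i, ∑ j, (p ω * ((if D i ω = dk then (1:ℝ) else 0) * (if D j ω = dl then (1:ℝ) else 0)))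
            * (y i dk / π i dk * (y j dl / π j dl)) := by
      intro ω
      rw [Finset.sum_mul_sum, Finset.mul_sum]
      refine Finset.sum_congr rfl fun i _ => ?_
      rw [Finset.mul_sum]
      exact Finset.sum_congr rfl fun j _ => by ring
    simp only [_root_.expect]
    rw [Finset.sum_congr rfl (fun ω _ => h1 ω), Finset.sum_comm]
    refine Finset.sum_congr rfl fun i _ => ?_
    rw [Finset.sum_comm]
    refine Finset.sum_congr rfl fun j _ => ?_
    rw [← Finset.sum_mul, ← hπc]
    ring
  -- compute LHS
  have hL1 : expect p (fun ω => ∑ i, ∑ j ∈ Finset.univ.erase i,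
        ((if D i ω = dk then (1:ℝ) else 0) * (if D j ω = dl then (1:ℝ) else 0) / πc i j)
          * (y i dk / π i dk) * (y j dl / π j dl) * (πc i j - π i dk * π j dl))
      = ∑ i, ∑ j ∈ Finset.univ.erase i,
          (y i dk / π i dk) * (y j dl / π j dl) * (πc i j - π i dk * π j dl) := by
    simp only [_root_.expect, Finset.mul_sum]
    rw [Finset.sum_comm]
    refine Finset.sum_congr rfl fun i _ => ?_
    rw [Finset.sum_comm]
    refine Finset.sum_congr rfl fun j hj => ?_
    have hij : j ≠ i := Finset.ne_of_mem_erase hj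
    have hc : πc i j ≠ 0 := (hpos i j (Ne.symm hij)).ne'
    have : ∀ ω, p ω * ((if D i ω = dk then (1:ℝ) else 0) * (if D j ω = dl then (1:ℝ) else 0)
          / πc i j * (y i dk / π i dk) * (y j dl / π j dl) * (πc i j - π i dk * π j dl))
        = (p ω * ((if D i ω = dk then (1:ℝ) else 0) * (if D j ω = dl then (1:ℝ) else 0)))
            * ((y i dk / π i dk) * (y j dl / π j dl) * (πc i j - π i dk * π j dl) / πc i j) := by
      intro ω; ring
    rw [Finset.sum_congr rfl (fun ω _ => this ω), ← Finset.sum_mul, ← hπc,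
      mul_comm, div_mul_cancel₀ _ hc]
  have hL2 : expect p (fun ω => ∑ i,
        ((if D i ω = dk then (1:ℝ) else 0) * y i dk ^ 2 / (2 * π i dk)
          + (if D i ω = dl then (1:ℝ) else 0) * y i dl ^ 2 / (2 * π i dl)))
      = ∑ i, y i dk * y i dl := by
    simp only [_root_.expect, Finset.mul_sum]
    rw [Finset.sum_comm]
    refine Finset.sum_congr rfl fun i _ => ?_
    have : ∀ ω, p ω * ((if D i ω = dk then (1:ℝ) else 0) * y i dk ^ 2 / (2 * π i dk)
          + (if D i ω = dl then (1:ℝ) else 0) * y i dl ^ 2 / (2 * π i dl))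
        = (p ω * (if D i ω = dk then (1:ℝ) else 0)) * (y i dk ^ 2 / (2 * π i dk))
          + (p ω * (if D i ω = dl then (1:ℝ) else 0)) * (y i dl ^ 2 / (2 * π i dl)) := by
      intro ω; ring
    rw [Finset.sum_congr rfl (fun ω _ => this ω), Finset.sum_add_distrib,
      ← Finset.sum_mul, ← Finset.sum_mul, ← hπ, ← hπ]
    have h1 := hπne i dk
    have h2 := hπne i dl
    have hyi := hy i
    field_simp
    rw [hyi]; ring
  have hsplit : expect p (fun ω =>
      (∑ i, ∑ j ∈ Finset.univ.erase i,
        ((if D i ω = dk then (1:ℝ) else 0) * (if D j ω = dl then (1:ℝ) else 0) / πc i j)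
          * (y i dk / π i dk) * (y j dl / π j dl) * (πc i j - π i dk * π j dl))
      - ∑ i, ((if D i ω = dk then (1:ℝ) else 0) * y i dk ^ 2 / (2 * π i dk)
          + (if D i ω = dl then (1:ℝ) else 0) * y i dl ^ 2 / (2 * π i dl)))
      = (∑ i, ∑ j ∈ Finset.univ.erase i,
          (y i dk / π i dk) * (y j dl / π j dl) * (πc i j - π i dk * π j dl))
        - ∑ i, y i dk * y i dl := by
    rw [← hL1, ← hL2]
    simp [_root_.expect, mul_sub, Finset.sum_sub_distrib]
  rw [hsplit, hEXY, hEX, hEY, Finset.sum_mul_sum]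
  have key : ∀ i : Fin N,
      (∑ j ∈ Finset.univ.erase i,
        (y i dk / π i dk) * (y j dl / π j dl) * (πc i j - π i dk * π j dl))
      - y i dk * y i dl
      = (∑ j, πc i j * (y i dk / π i dk) * (y j dl / π j dl))
        - ∑ j, y i dk * y j dl := by
    intro i
    have e1 : (∑ j, πc i j * (y i dk / π i dk) * (y j dl / π j dl))
        = ∑ j ∈ Finset.univ.erase i, πc i j * (y i dk / π i dk) * (y j dl / π j dl) := by
      rw [← Finset.add_sum_erase _ _ (Finset.mem_univ i), hπcii i, zero_mul, zero_mul,
        zero_add]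
    have e2 : (∑ j, y i dk * y j dl)
        = y i dk * y i dl + ∑ j ∈ Finset.univ.erase i,
            (y i dk / π i dk) * (y j dl / π j dl) * (π i dk * π j dl) := by
      rw [← Finset.add_sum_erase _ _ (Finset.mem_univ i)]
      congr 1
      refine Finset.sum_congr rfl fun j _ => ?_
      have h1 := hπne i dk
      have h2 := hπne j dl
      field_simp
    rw [e1, e2]
    have e3 : ∀ j ∈ Finset.univ.erase i,
        (y i dk / π i dk) * (y j dl / π j dl) * (πc i j - π i dk * π j dl)
        = πc i j * (y i dk / π i dk) * (y j dl / π j dl)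
          - (y i dk / π i dk) * (y j dl / π j dl) * (π i dk * π j dl) := fun j _ => by ring
    rw [Finset.sum_congr rfl e3, Finset.sum_sub_distrib]
    ring
  rw [← Finset.sum_sub_distrib, Finset.sum_congr rfl (fun i _ => key i),
    Finset.sum_sub_distrib]
end

section
/- Under boundedness (|y_i(d_k)|/π_i(d_k) ≤ c for all i, k) the variance of the Horvitz-Thompson mean estimator satisfies N² Var(μ̂(d_k)) ≤ c² N + c² Σ_i Σ_j g_{ij}, where g_{ij} = 1 if the exposure indicators of i and j are dependent (π_{ij}(d_k) ≠ π_i(d_k)π_j(d_k)) and g_{ij} = 0 otherwise. -/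
open Finset

section aux
variable {Ωs : Type*} [Fintype Ωs] (p : Ωs → ℝ)

lemma expect_smul (a : ℝ) (X : Ωs → ℝ) :
    _root_.expect p (fun ω => a * X ω) = a * _root_.expect p X := by
  simp [_root_.expect, Finset.mul_sum, mul_left_comm]

lemma expect_sum {ι : Type*} [Fintype ι] (X : ι → Ωs → ℝ) :
    _root_.expect p (fun ω => ∑ i, X i ω) = ∑ i, _root_.expect p (X i) := by
  simp only [_root_.expect, Finset.mul_sum]
  rw [Finset.sum_comm]

lemma var_smul (a : ℝ) (X : Ωs → ℝ) :
    Var' p (fun ω => a * X ω) = a ^ 2 * Var' p X := by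
  simp only [Var', expect_smul]
  have : ∀ ω, (a * X ω - a * _root_.expect p X) ^ 2 = a ^ 2 * (X ω - _root_.expect p X) ^ 2 := by
    intro ω; ring
  simp only [this, expect_smul]

lemma cov_formula (hp1 : ∑ ω, p ω = 1) (X Y : Ωs → ℝ) :
    Cov' p X Y = _root_.expect p (fun ω => X ω * Y ω) - _root_.expect p X * _root_.expect p Y := by
  simp only [Cov', _root_.expect]
  have h : ∀ ω : Ωs, p ω * ((X ω - ∑ ω', p ω' * X ω') * (Y ω - ∑ ω', p ω' * Y ω')) =
      p ω * (X ω * Y ω) - (∑ ω', p ω' * X ω') * (p ω * Y ω)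
      - (∑ ω', p ω' * Y ω') * (p ω * X ω)
      + (∑ ω', p ω' * X ω') * (∑ ω', p ω' * Y ω') * p ω := by
    intro ω; ring
  rw [Finset.sum_congr rfl fun ω _ => h ω]
  simp only [Finset.sum_add_distrib, Finset.sum_sub_distrib, ← Finset.mul_sum, hp1]
  ring

lemma var_eq_cov (X : Ωs → ℝ) : Var' p X = Cov' p X X := by
  simp [Var', Cov', sq]

lemma var_sum (hp1 : ∑ ω, p ω = 1) {ι : Type*} [Fintype ι] (X : ι → Ωs → ℝ) :
    Var' p (fun ω => ∑ i, X i ω) = ∑ i, ∑ j, Cov' p (X i) (X j) := by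
  rw [var_eq_cov, cov_formula p hp1]
  have h1 : ∀ ω : Ωs, (∑ i, X i ω) * (∑ j, X j ω) = ∑ i, ∑ j, X i ω * X j ω := by
    intro ω; rw [Finset.sum_mul_sum]
  calc _root_.expect p (fun ω => (∑ i, X i ω) * (∑ j, X j ω))
        - _root_.expect p (fun ω => ∑ i, X i ω) * _root_.expect p (fun ω => ∑ i, X i ω)
      = (∑ i, ∑ j, _root_.expect p (fun ω => X i ω * X j ω))
        - ∑ i, ∑ j, _root_.expect p (X i) * _root_.expect p (X j) := by
        rw [show (fun ω => (∑ i, X i ω) * (∑ j, X j ω)) = fun ω => ∑ i, ∑ j, X i ω * X j ω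
            from funext h1]
        rw [expect_sum p fun i ω => ∑ j, X i ω * X j ω]
        rw [expect_sum p X, Finset.sum_mul_sum]
        congr 1
        exact Finset.sum_congr rfl fun i _ => expect_sum p fun j ω => X i ω * X j ω
    _ = ∑ i, ∑ j, Cov' p (X i) (X j) := by
        rw [← Finset.sum_sub_distrib]
        refine Finset.sum_congr rfl fun i _ => ?_
        rw [← Finset.sum_sub_distrib]
        exact Finset.sum_congr rfl fun j _ => (cov_formula p hp1 _ _).symm

end aux

/-- Bound on the variance of the HT mean estimator under boundedness of weighted outcomes
and limited dependence between exposure indicators. -/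
theorem stmt10 {Ωs : Type*} [Fintype Ωs] (p : Ωs → ℝ)
    (hp0 : ∀ ω, 0 ≤ p ω) (hp1 : ∑ ω, p ω = 1)
    {N : ℕ} {Δ : Type*} [DecidableEq Δ]
    (D : Fin N → Ωs → Δ) (y : Fin N → Δ → ℝ)
    (π : Fin N → Δ → ℝ)
    (hπ : ∀ i d, π i d = ∑ ω, p ω * (if D i ω = d then (1:ℝ) else 0))
    (hπ01 : ∀ i d, 0 < π i d ∧ π i d < 1)
    (dk : Δ) (πij : Fin N → Fin N → ℝ)
    (hπij : ∀ i j, πij i j = ∑ ω, p ω *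
      ((if D i ω = dk then (1:ℝ) else 0) * (if D j ω = dk then (1:ℝ) else 0)))
    (c : ℝ) (hc : ∀ i, |y i dk| / π i dk ≤ c)
    (g : Fin N → Fin N → ℝ)
    (hg : ∀ i j, g i j = if πij i j = π i dk * π j dk then 0 else 1) :
    (N : ℝ) ^ 2 * Var' p (fun ω =>
        (1 / (N : ℝ)) * ∑ i, (if D i ω = dk then (1:ℝ) else 0) * y i dk / π i dk)
      ≤ c ^ 2 * N + c ^ 2 * ∑ i, ∑ j, g i j := by
  rcases Nat.eq_zero_or_pos N with hN | hN
  · subst hN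
    simp [Var', _root_.expect]
  have hNne : (N : ℝ) ≠ 0 := Nat.cast_ne_zero.mpr hN.ne'
  set X : Fin N → Ωs → ℝ := fun i ω => (if D i ω = dk then (1:ℝ) else 0) * y i dk / π i dk
    with hXdef
  -- rescale
  have hvar : (N : ℝ) ^ 2 * Var' p (fun ω => (1 / (N : ℝ)) * ∑ i, X i ω)
      = Var' p (fun ω => ∑ i, X i ω) := by
    rw [var_smul]
    field_simp
  rw [hvar, var_sum p hp1]
  -- expectations
  have hEI : ∀ i, _root_.expect p (fun ω => if D i ω = dk then (1:ℝ) else 0) = π i dk := by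
    intro i; rw [hπ i dk]; rfl
  have hEX : ∀ i, _root_.expect p (X i) = (y i dk / π i dk) * π i dk := by
    intro i
    have : X i = fun ω => (y i dk / π i dk) * (if D i ω = dk then (1:ℝ) else 0) := by
      funext ω; simp only [hXdef]; ring
    rw [this, expect_smul, hEI]
  have hEXX : ∀ i j, _root_.expect p (fun ω => X i ω * X j ω)
      = (y i dk / π i dk) * (y j dk / π j dk) * πij i j := by
    intro i j
    have h1 : (fun ω => X i ω * X j ω) = fun ω => ((y i dk / π i dk) * (y j dk / π j dk)) *
        ((if D i ω = dk then (1:ℝ) else 0) * (if D j ω = dk then (1:ℝ) else 0)) := by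
      funext ω; simp only [hXdef]; ring
    rw [h1, expect_smul, hπij i j]; rfl
  have hcov : ∀ i j, Cov' p (X i) (X j)
      = (y i dk / π i dk) * (y j dk / π j dk) * (πij i j - π i dk * π j dk) := by
    intro i j
    rw [cov_formula p hp1, hEXX, hEX, hEX]
    ring
  -- per-term bound
  have hterm : ∀ i j, Cov' p (X i) (X j) ≤ c ^ 2 * g i j := by
    intro i j
    rw [hcov, hg]
    by_cases hij : πij i j = π i dk * π j dk
    · simp [hij]
    · simp only [hij, if_false, mul_one]
      have habs : ∀ k, |y k dk / π k dk| ≤ c := by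
        intro k
        rw [abs_div, abs_of_pos (hπ01 k dk).1]
        exact hc k
      have hc0 : 0 ≤ c := (div_nonneg (abs_nonneg (y i dk)) (hπ01 i dk).1.le).trans (hc i)
      calc (y i dk / π i dk) * (y j dk / π j dk) * (πij i j - π i dk * π j dk)
            ≤ |(y i dk / π i dk) * (y j dk / π j dk) * (πij i j - π i dk * π j dk)| :=
              le_abs_self _
          _ = |y i dk / π i dk| * |y j dk / π j dk| * |πij i j - π i dk * π j dk| := by
              rw [abs_mul, abs_mul]
          _ ≤ c * c * 1 := by
              have hd : |πij i j - π i dk * π j dk| ≤ 1 := by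
                have h0 : 0 ≤ πij i j := by
                  rw [hπij]
                  apply Finset.sum_nonneg
                  intro ω _
                  have : (0:ℝ) ≤ (if D i ω = dk then (1:ℝ) else 0) *
                      (if D j ω = dk then (1:ℝ) else 0) := by positivity
                  exact mul_nonneg (hp0 ω) this
                have h1' : πij i j ≤ π i dk := by
                  rw [hπij, hπ]
                  apply Finset.sum_le_sum
                  intro ω _
                  apply mul_le_mul_of_nonneg_left _ (hp0 ω)
                  by_cases h : D i ω = dk <;> by_cases h' : D j ω = dk <;> simp [h, h']
                have hπi := hπ01 i dk
                have hπj := hπ01 j dk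
                rw [abs_le]
                constructor <;> nlinarith [hπi.1, hπi.2, hπj.1, hπj.2]
              have h2 : |y i dk / π i dk| * |y j dk / π j dk| ≤ c * c :=
                mul_le_mul (habs i) (habs j) (abs_nonneg _)
                  (le_trans (abs_nonneg _) (habs i))
              exact mul_le_mul h2 hd (abs_nonneg _) (mul_nonneg hc0 hc0)
          _ = c ^ 2 := by ring
  calc ∑ i, ∑ j, Cov' p (X i) (X j) ≤ ∑ i, ∑ j, c ^ 2 * g i j :=
        Finset.sum_le_sum fun i _ => Finset.sum_le_sum fun j _ => hterm i j
    _ = c ^ 2 * ∑ i, ∑ j, g i j := by rw [Finset.mul_sum]; congr 1; funext i; rw [Finset.mul_sum]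
    _ ≤ c ^ 2 * N + c ^ 2 * ∑ i, ∑ j, g i j := le_add_of_nonneg_left (by positivity)
end
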